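/- arXiv:1609.09628 — 2 statements merged into one kernel-verified Lean document; each statement's English description precedes it below -/
import Mathlib

section
/- Let L/k be an extension of finite fields. The centralizer of SL_n(k) inside SL_n(L) consists of scalar matrices, i.e. C_{SL_n(L)}(SL_n(k)) ≤ Z(SL_n(L)). -/
open Matrix

/-!
The transvections `1 + E_{ij}` (`i ≠ j`) have integer entries, so they lie in the image of
`SL_n(k)` in `SL_n(L)`. A matrix commuting with `1 + E_{ij}` commutes with `E_{ij}`, and a matrix
commuting with every `E_{ij}` is scalar.
-/

namespace Matrix

variable {n R S : Type*} [Fintype n] [DecidableEq n]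

theorem commute_single_of_commute_transvection [CommRing R] {i j : n} {c : R}
    {M : Matrix n n R} (h : Commute (transvection i j c) M) : Commute (single i j c) M := by
  simpa [transvection] using h.sub_left (Commute.one_left M)

namespace SpecialLinearGroup

theorem map_transvection [CommRing R] [CommRing S] (f : R →+* S) {i j : n} (hij : i ≠ j)
    (c : R) : map f (transvection hij c) = transvection hij (f c) := by
  ext a b
  simp [transvection_coe, single_apply, one_apply, apply_ite f]

theorem mem_center_of_coe_mem_range_scalar [CommRing R] {A : SpecialLinearGroup n R}
    (hA : (A : Matrix n n R) ∈ Set.range (scalar n)) :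
    A ∈ Subgroup.center (SpecialLinearGroup n R) := by
  obtain ⟨r, hr⟩ := hA
  refine mem_center_iff.2 ⟨r, ?_, hr⟩
  simpa [← hr] using A.det_coe

theorem mem_center_of_forall_commute_transvection_one [CommRing R] {A : SpecialLinearGroup n R}
    (hA : ∀ i j (hij : i ≠ j), Commute (transvection hij (1 : R)) A) :
    A ∈ Subgroup.center (SpecialLinearGroup n R) :=
  mem_center_of_coe_mem_range_scalar <| mem_range_scalar_of_commute_single fun i j hij =>
    commute_single_of_commute_transvection (congrArg Subtype.val (hA i j hij).eq)

end SpecialLinearGroup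

end Matrix

theorem stmt_3_general (k L : Type) [Field k] [Field L]
    (f : k →+* L) (n : ℕ)
    (g : Matrix.SpecialLinearGroup (Fin n) L)
    (hg : ∀ h : Matrix.SpecialLinearGroup (Fin n) k,
      g * Matrix.SpecialLinearGroup.map f h = Matrix.SpecialLinearGroup.map f h * g) :
    g ∈ Subgroup.center (Matrix.SpecialLinearGroup (Fin n) L) := by
  refine SpecialLinearGroup.mem_center_of_forall_commute_transvection_one fun i j hij => ?_
  rw [← map_one f, ← SpecialLinearGroup.map_transvection]
  exact (hg _).symm

/-- For an extension `L/k` of finite fields, the centralizer of `SL_n(k)` inside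
`SL_n(L)` is contained in the center of `SL_n(L)`. -/
theorem stmt_3 (k L : Type) [Field k] [Field L] [Fintype k] [Fintype L]
    (f : k →+* L) (n : ℕ)
    (g : Matrix.SpecialLinearGroup (Fin n) L)
    (hg : ∀ h : Matrix.SpecialLinearGroup (Fin n) k,
      g * Matrix.SpecialLinearGroup.map f h = Matrix.SpecialLinearGroup.map f h * g) :
    g ∈ Subgroup.center (Matrix.SpecialLinearGroup (Fin n) L) :=
  stmt_3_general k L f n g hg
end

section
/- Let L/k be an extension of finite fields and let σ ∈ Gal(L/k) be the Frobenius x ↦ x^{|k|}. If g ∈ SL_n(L) normalizes SL_n(k), then σ(g)·g⁻¹ is a scalar matrix λI with λ ∈ μ_n(L), where σ is applied entrywise. -/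
/-!
Frobenius fixes `k`, hence fixes `SL_n(k)` entrywise. Since `g` normalizes `SL_n(k)`, applying `σ`
to `g h g⁻¹` for `h ∈ SL_n(k)` shows that `c = g⁻¹ σ(g)` centralizes `SL_n(k)`. Already the
transvections `1 + E_ij` of `SL_n(k)` force `c` to be scalar, i.e. central in `SL_n(L)`; then
`σ(g) g⁻¹ = g c g⁻¹ = c`, and a scalar matrix of determinant one is an `n`-th root of unity.
-/

open Matrix

theorem Subgroup.commute_inv_mul_apply_of_mem_normalizer {G : Type*} [Group G] {H : Subgroup G}
    (φ : G →* G) (hφ : ∀ h ∈ H, φ h = h) {g : G} (hg : g ∈ normalizer (H : Set G))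
    {h : G} (hh : h ∈ H) : Commute (g⁻¹ * φ g) h := by
  have hconj : φ g * h * (φ g)⁻¹ = g * h * g⁻¹ := by
    simpa [hφ h hh] using hφ _ ((mem_normalizer_iff.mp hg h).mp hh)
  calc g⁻¹ * φ g * h = g⁻¹ * (φ g * h * (φ g)⁻¹) * φ g := by group
    _ = g⁻¹ * (g * h * g⁻¹) * φ g := by rw [hconj]
    _ = h * (g⁻¹ * φ g) := by group

namespace Matrix.SpecialLinearGroup

variable {n : Type*} [Fintype n] [DecidableEq n] {R S : Type*} [CommRing R] [CommRing S]

theorem map_map_of_comp_eq {f : R →+* S} {σ : S →+* S} (h : σ.comp f = f)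
    (B : SpecialLinearGroup n R) : map σ (map f B) = map f B := by
  ext i j
  simp only [map_apply_coe, RingHom.mapMatrix_apply, Matrix.map_apply, ← RingHom.comp_apply, h]

theorem mem_center_of_forall_commute_map (f : R →+* S) {A : SpecialLinearGroup n S}
    (hA : ∀ B, Commute A (map f B)) : A ∈ Subgroup.center (SpecialLinearGroup n S) := by
  obtain ⟨r, hr⟩ : (A : Matrix n n S) ∈ Set.range (scalar n) := by
    refine mem_range_scalar_of_commute_single fun i j hij => ?_
    have := congrArg Subtype.val (hA (transvection hij 1)).eq
    refine (commute_iff_eq _ _).mpr ?_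
    simpa [transvection_coe, mul_add, add_mul, map_apply_coe, Matrix.map_add, map_single]
      using this.symm
  refine Subgroup.mem_center_iff.mpr fun B => Subtype.ext ?_
  simpa [coe_mul, ← hr] using (scalar_commute r (Commute.all r) (B : Matrix n n S)).symm.eq

end Matrix.SpecialLinearGroup

theorem stmt_5_general (k L : Type) [Field k] [Field L] [Fintype k]
    (f : k →+* L) (n : ℕ)
    (σ : L →+* L) (hσ : ∀ x : L, σ x = x ^ Fintype.card k)
    (g : Matrix.SpecialLinearGroup (Fin n) L)
    (hg : g ∈ Subgroup.normalizer ((Matrix.SpecialLinearGroup.map (n := Fin n) f).range : Set (Matrix.SpecialLinearGroup (Fin n) L))) :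
    ∃ lam : L, lam ^ n = 1 ∧
      (g.val.map σ) * (g⁻¹).val = lam • (1 : Matrix (Fin n) (Fin n) L) := by
  have hσf : σ.comp f = f := RingHom.ext fun x => by
    rw [RingHom.comp_apply, hσ, ← map_pow, FiniteField.pow_card]
  set φ := SpecialLinearGroup.map (n := Fin n) σ
  have hc : g⁻¹ * φ g ∈ Subgroup.center _ :=
    SpecialLinearGroup.mem_center_of_forall_commute_map f fun B =>
      Subgroup.commute_inv_mul_apply_of_mem_normalizer φ
        (by rintro _ ⟨B, rfl⟩; exact SpecialLinearGroup.map_map_of_comp_eq hσf B)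
        hg ⟨B, rfl⟩
  have hconj : φ g * g⁻¹ = g⁻¹ * φ g := by
    calc φ g * g⁻¹ = g * (g⁻¹ * φ g) * g⁻¹ := by group
      _ = g⁻¹ * φ g := by rw [Subgroup.mem_center_iff.mp hc g]; group
  obtain ⟨r, hrn, hr⟩ := Matrix.SpecialLinearGroup.mem_center_iff.mp hc
  refine ⟨r, by simpa using hrn, ?_⟩
  simpa [φ, SpecialLinearGroup.coe_mul, SpecialLinearGroup.map_apply_coe, ← hr,
    smul_one_eq_diagonal] using congrArg Subtype.val hconj

/-- Let `L/k` be an extension of finite fields and `σ ∈ Gal(L/k)` the Frobenius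
`x ↦ x^{|k|}`. If `g ∈ SL_n(L)` normalizes `SL_n(k)`, then `σ(g)·g⁻¹` (with `σ`
applied entrywise) is a scalar matrix `λ·1` with `λ` an `n`-th root of unity in `L`. -/
theorem stmt_5 (k L : Type) [Field k] [Field L] [Fintype k] [Fintype L]
    (f : k →+* L) (n : ℕ)
    (σ : L →+* L) (hσ : ∀ x : L, σ x = x ^ Fintype.card k)
    (g : Matrix.SpecialLinearGroup (Fin n) L)
    (hg : g ∈ Subgroup.normalizer ((Matrix.SpecialLinearGroup.map (n := Fin n) f).range : Set (Matrix.SpecialLinearGroup (Fin n) L))) :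
    ∃ lam : L, lam ^ n = 1 ∧
      (g.val.map σ) * (g⁻¹).val = lam • (1 : Matrix (Fin n) (Fin n) L) :=
  stmt_5_general k L f n σ hσ g hg
end
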